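/- arXiv:2403.12367 — 3 statements merged into one kernel-verified Lean document; each statement's English description precedes it below -/
import Mathlib

section
/- Let P = (P₀, P₁) and Q = (Q₀, Q₁) be real orthogonal p×p matrices, where P₀, Q₀ ∈ ℝ^{p×1} are the first columns and P₁, Q₁ ∈ ℝ^{p×(p−1)} are the remaining columns. Define dist(P₀, Q₀) = ‖P₀P₀ᵀ − Q₀Q₀ᵀ‖₂. Then dist(P₀, Q₀) = ‖P₁ᵀ Q₀‖₂ = ‖Q₁ᵀ P₀‖₂. -/
open scoped Matrix.Norms.L2Operator
open Matrix

/-- Let `P = (P₀, P₁)` and `Q = (Q₀, Q₁)` be real orthogonal `p×p` matrices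
(`p = n + 1`), where `P₀, Q₀` are the first columns and `P₁, Q₁` the remaining `p−1` columns.
Define `dist(P₀, Q₀) = ‖P₀P₀ᵀ − Q₀Q₀ᵀ‖₂` (spectral norm).  Then
`dist(P₀, Q₀) = ‖P₁ᵀ Q₀‖₂ = ‖Q₁ᵀ P₀‖₂`. -/
theorem dist_first_columns_eq_crossterm_norms
    {p n : ℕ} (hp : p = n + 1)
    (P₀ Q₀ : Matrix (Fin p) (Fin 1) ℝ) (P₁ Q₁ : Matrix (Fin p) (Fin n) ℝ)
    (hP₁ : (fromCols P₀ P₁)ᵀ * fromCols P₀ P₁ = 1)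
    (hP₂ : fromCols P₀ P₁ * (fromCols P₀ P₁)ᵀ = 1)
    (hQ₁ : (fromCols Q₀ Q₁)ᵀ * fromCols Q₀ Q₁ = 1)
    (hQ₂ : fromCols Q₀ Q₁ * (fromCols Q₀ Q₁)ᵀ = 1) :
    ‖P₀ * P₀ᵀ - Q₀ * Q₀ᵀ‖ = ‖P₁ᵀ * Q₀‖ ∧ ‖P₁ᵀ * Q₀‖ = ‖Q₁ᵀ * P₀‖ := by
  classical
  -- block identities from orthogonality
  have hPb : fromBlocks (P₀ᵀ * P₀) (P₀ᵀ * P₁) (P₁ᵀ * P₀) (P₁ᵀ * P₁)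
      = fromBlocks (1 : Matrix (Fin 1) (Fin 1) ℝ) 0 0 (1 : Matrix (Fin n) (Fin n) ℝ) := by
    rw [← fromRows_mul_fromCols, ← transpose_fromCols, hP₁, fromBlocks_one]
  have hQb : fromBlocks (Q₀ᵀ * Q₀) (Q₀ᵀ * Q₁) (Q₁ᵀ * Q₀) (Q₁ᵀ * Q₁)
      = fromBlocks (1 : Matrix (Fin 1) (Fin 1) ℝ) 0 0 (1 : Matrix (Fin n) (Fin n) ℝ) := by
    rw [← fromRows_mul_fromCols, ← transpose_fromCols, hQ₁, fromBlocks_one]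
  obtain ⟨hP00, -, -, -⟩ := fromBlocks_inj.mp hPb
  obtain ⟨hQ00, -, -, -⟩ := fromBlocks_inj.mp hQb
  have hPfull : P₀ * P₀ᵀ + P₁ * P₁ᵀ = 1 := by
    rw [← fromCols_mul_fromRows, ← transpose_fromCols]; exact hP₂
  have hQfull : Q₀ * Q₀ᵀ + Q₁ * Q₁ᵀ = 1 := by
    rw [← fromCols_mul_fromRows, ← transpose_fromCols]; exact hQ₂
  set c : ℝ := (P₀ᵀ * Q₀) 0 0 with hc
  have hA : P₀ᵀ * Q₀ = c • (1 : Matrix (Fin 1) (Fin 1) ℝ) := by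
    ext i j
    fin_cases i <;> fin_cases j <;> simp [hc]
  have hAT : Q₀ᵀ * P₀ = c • (1 : Matrix (Fin 1) (Fin 1) ℝ) := by
    have : Q₀ᵀ * P₀ = (P₀ᵀ * Q₀)ᵀ := by
      rw [transpose_mul, transpose_transpose]
    rw [this, hA]
    ext i j; fin_cases i <;> fin_cases j <;> simp
  -- contraction lemmas
  have cPP : ∀ {k : Type} (T : Matrix (Fin 1) k ℝ), P₀ᵀ * (P₀ * T) = T := by
    intro k T; rw [← Matrix.mul_assoc, hP00, Matrix.one_mul]
  have cQQ : ∀ {k : Type} (T : Matrix (Fin 1) k ℝ), Q₀ᵀ * (Q₀ * T) = T := by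
    intro k T; rw [← Matrix.mul_assoc, hQ00, Matrix.one_mul]
  have cPQ : ∀ {k : Type} (T : Matrix (Fin 1) k ℝ), P₀ᵀ * (Q₀ * T) = c • T := by
    intro k T; rw [← Matrix.mul_assoc, hA, Matrix.smul_mul, Matrix.one_mul]
  have cQP : ∀ {k : Type} (T : Matrix (Fin 1) k ℝ), Q₀ᵀ * (P₀ * T) = c • T := by
    intro k T; rw [← Matrix.mul_assoc, hAT, Matrix.smul_mul, Matrix.one_mul]
  set M : Matrix (Fin p) (Fin p) ℝ := P₀ * P₀ᵀ - Q₀ * Q₀ᵀ with hM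
  set N : Matrix (Fin p) (Fin p) ℝ := M * M with hNdef
  have hN : N = P₀ * P₀ᵀ + Q₀ * Q₀ᵀ - c • (P₀ * Q₀ᵀ + Q₀ * P₀ᵀ) := by
    rw [hNdef, hM]
    simp only [sub_mul, mul_sub, Matrix.mul_assoc, cPP, cQQ, cPQ, cQP,
      Matrix.mul_smul, Matrix.smul_mul, smul_smul]
    module
  have hNN : N * N = (1 - c ^ 2) • N := by
    rw [hN]
    simp only [sub_mul, mul_sub, add_mul, mul_add, Matrix.mul_assoc, Matrix.mul_smul,
      Matrix.smul_mul, cPP, cQQ, cPQ, cQP, smul_smul, smul_add, smul_sub]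
    module
  have hNQ : N * Q₀ = (1 - c ^ 2) • Q₀ := by
    rw [hN]
    have h1 : P₀ * P₀ᵀ * Q₀ = c • P₀ := by
      rw [Matrix.mul_assoc, hA, Matrix.mul_smul, Matrix.mul_one]
    have h2 : Q₀ * Q₀ᵀ * Q₀ = Q₀ := by
      rw [Matrix.mul_assoc, hQ00, Matrix.mul_one]
    have h3 : P₀ * Q₀ᵀ * Q₀ = P₀ := by
      rw [Matrix.mul_assoc, hQ00, Matrix.mul_one]
    have h4 : Q₀ * P₀ᵀ * Q₀ = c • Q₀ := by
      rw [Matrix.mul_assoc, hA, Matrix.mul_smul, Matrix.mul_one]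
    rw [Matrix.sub_mul, Matrix.add_mul, Matrix.smul_mul, Matrix.add_mul, h1, h2, h3, h4,
      smul_add, smul_smul]
    rw [sub_smul, one_smul, pow_two]
    abel
  -- `b = P₁ᵀ Q₀` and `d = Q₁ᵀ P₀`
  set b : Matrix (Fin n) (Fin 1) ℝ := P₁ᵀ * Q₀ with hb
  set d : Matrix (Fin n) (Fin 1) ℝ := Q₁ᵀ * P₀ with hd
  have hP1P1 : P₁ * P₁ᵀ = 1 - P₀ * P₀ᵀ := eq_sub_of_add_eq' hPfull
  have hQ1Q1 : Q₁ * Q₁ᵀ = 1 - Q₀ * Q₀ᵀ := eq_sub_of_add_eq' hQfull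
  have hbb : bᵀ * b = (1 - c ^ 2) • (1 : Matrix (Fin 1) (Fin 1) ℝ) := by
    rw [hb, transpose_mul, transpose_transpose, Matrix.mul_assoc, ← Matrix.mul_assoc P₁,
      hP1P1, Matrix.sub_mul, Matrix.one_mul, Matrix.mul_sub, hQ00, Matrix.mul_assoc P₀,
      cQP, hA, smul_smul]
    module
  have hdd : dᵀ * d = (1 - c ^ 2) • (1 : Matrix (Fin 1) (Fin 1) ℝ) := by
    rw [hd, transpose_mul, transpose_transpose, Matrix.mul_assoc, ← Matrix.mul_assoc Q₁,
      hQ1Q1, Matrix.sub_mul, Matrix.one_mul, Matrix.mul_sub, hP00, Matrix.mul_assoc Q₀,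
      cPQ, hAT, smul_smul]
    module
  -- nonnegativity of `1 - c ^ 2`
  have hs2 : 0 ≤ 1 - c ^ 2 := by
    have h0 : (bᵀ * b) 0 0 = 1 - c ^ 2 := by rw [hbb]; simp
    rw [← h0, Matrix.mul_apply]
    exact Finset.sum_nonneg fun i _ => by
      simp only [Matrix.transpose_apply]; exact mul_self_nonneg _
  -- real conjTranspose is transpose
  have hct : ∀ {m k : Type} (A : Matrix m k ℝ), Aᴴ = Aᵀ := fun A =>
    conjTranspose_eq_transpose_of_trivial A
  have hMH : Mᴴ = M := by
    rw [hct, hM, transpose_sub, transpose_mul, transpose_mul, transpose_transpose,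
      transpose_transpose]
  have hNH : Nᴴ = N := by
    rw [hct, hNdef, transpose_mul]
    have : Mᵀ = M := by rw [← hct]; exact hMH
    rw [this]
  -- norm of N
  have hQ0ne : Q₀ ≠ 0 := by
    intro h
    have := congrFun (congrFun hQ00 0) 0
    rw [h] at this
    simp at this
  have hnormN : ‖N‖ = 1 - c ^ 2 := by
    have e1 : ‖N‖ * ‖N‖ = (1 - c ^ 2) * ‖N‖ := by
      rw [← Matrix.l2_opNorm_conjTranspose_mul_self N, hNH, hNN, norm_smul,
        Real.norm_of_nonneg hs2]
    rcases mul_eq_mul_right_iff.mp e1 with h | h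
    · exact h
    · have hN0 : N = 0 := norm_eq_zero.mp h
      have : (1 - c ^ 2) • Q₀ = 0 := by rw [← hNQ, hN0, Matrix.zero_mul]
      rcases smul_eq_zero.mp this with h' | h'
      · rw [h, h']
      · exact absurd h' hQ0ne
  have hone : ‖(1 : Matrix (Fin 1) (Fin 1) ℝ)‖ = 1 := CStarRing.norm_one
  have hnormM : ‖M‖ * ‖M‖ = 1 - c ^ 2 := by
    rw [← Matrix.l2_opNorm_conjTranspose_mul_self M, hMH, ← hNdef, hnormN]
  have hnormb : ‖b‖ * ‖b‖ = 1 - c ^ 2 := by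
    rw [← Matrix.l2_opNorm_conjTranspose_mul_self b, hct, hbb, norm_smul,
      Real.norm_of_nonneg hs2, hone, mul_one]
  have hnormd : ‖d‖ * ‖d‖ = 1 - c ^ 2 := by
    rw [← Matrix.l2_opNorm_conjTranspose_mul_self d, hct, hdd, norm_smul,
      Real.norm_of_nonneg hs2, hone, mul_one]
  have key : ∀ x y : ℝ, 0 ≤ x → 0 ≤ y → x * x = y * y → x = y := by
    intro x y hx hy h
    nlinarith
  constructor
  · exact key _ _ (norm_nonneg M) (norm_nonneg b) (by rw [hnormM, hnormb])
  · exact key _ _ (norm_nonneg b) (norm_nonneg d) (by rw [hnormb, hnormd])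
end

section
/- Let G be a real symmetric positive semidefinite p×p matrix of rank r (1 ≤ r < p) with spectral decomposition G = U₀ Λ₀ U₀ᵀ, where U₀ ∈ ℝ^{p×r} has orthonormal columns and Λ₀ = diag(λ₁, …, λ_r) with λ₁ ≥ ⋯ ≥ λ_r > 0. Let H be a real symmetric p×p matrix, set Ĝ = G + H, and let Û₁ ∈ ℝ^{p×(p−r)} have orthonormal columns that are eigenvectors of Ĝ associated with its p−r smallest eigenvalues, so Ĝ Û₁ = Û₁ Λ̂₁ with Λ̂₁ the diagonal matrix of those eigenvalues. If ‖H‖₂ < λ_r, then ‖Û₁ᵀ U₀‖₂ ≤ ‖H‖₂ / (λ_r − ‖H‖₂). -/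
open scoped Matrix.Norms.L2Operator
open Matrix

namespace DKaux

variable {m n : Type*} [Fintype m] [Fintype n] [DecidableEq m] [DecidableEq n]

variable {m n : Type*} [Fintype m] [Fintype n] [DecidableEq m] [DecidableEq n]

lemma opNorm_diagonal_le (d : n → ℝ) (b : ℝ) (hb : 0 ≤ b) (h : ∀ i, |d i| ≤ b) :
    ‖Matrix.diagonal d‖ ≤ b := by
  rw [Matrix.l2_opNorm_def]
  refine ContinuousLinearMap.opNorm_le_bound _ hb fun x => ?_
  simp only [LinearEquiv.trans_apply, Matrix.toLin'_apply, LinearMap.coe_toContinuousLinearMap']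
  rw [EuclideanSpace.norm_eq, EuclideanSpace.norm_eq,
    ← Real.sqrt_sq hb, ← Real.sqrt_mul (by positivity)]
  apply Real.sqrt_le_sqrt
  rw [Finset.mul_sum]
  apply Finset.sum_le_sum
  intro i _
  have : (Matrix.toEuclideanLin (Matrix.diagonal d) x) i = d i * x i := by
    simp [Matrix.toEuclideanLin_apply, Matrix.mulVec_diagonal]
  rw [this]
  have h1 : ‖d i * x i‖ ^ 2 = |d i| ^ 2 * ‖x i‖ ^ 2 := by
    simp [norm_mul, mul_pow, abs_mul]
  rw [h1]
  gcongr
  exact h i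

lemma norm_one_le : ‖(1 : Matrix n n ℝ)‖ ≤ 1 := by
  have := opNorm_diagonal_le (fun _ : n => (1:ℝ)) 1 zero_le_one (fun i => by simp)
  simpa using this

lemma norm_one_eq [Nonempty n] : ‖(1 : Matrix n n ℝ)‖ = 1 := by
  have h1 : ‖(1 : Matrix n n ℝ)ᴴ * 1‖ = ‖(1 : Matrix n n ℝ)‖ * ‖(1 : Matrix n n ℝ)‖ :=
    Matrix.l2_opNorm_conjTranspose_mul_self 1
  simp only [Matrix.conjTranspose_one, mul_one] at h1
  have hne : ‖(1 : Matrix n n ℝ)‖ ≠ 0 := by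
    intro h0
    have : (1 : Matrix n n ℝ) = 0 := norm_eq_zero.mp h0
    have := congrFun (congrFun this (Classical.arbitrary n)) (Classical.arbitrary n)
    simp at this
  have h2 : ‖(1 : Matrix n n ℝ)‖ * (‖(1 : Matrix n n ℝ)‖ - 1) = 0 := by nlinarith [h1]
  rcases mul_eq_zero.mp h2 with h | h
  · exact absurd h hne
  · linarith

lemma norm_transpose (A : Matrix m n ℝ) : ‖Aᵀ‖ = ‖A‖ := by
  rw [← Matrix.conjTranspose_eq_transpose_of_trivial, Matrix.l2_opNorm_conjTranspose]

lemma norm_sq (A : Matrix m n ℝ) : ‖Aᵀ * A‖ = ‖A‖ * ‖A‖ := by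
  rw [← Matrix.conjTranspose_eq_transpose_of_trivial]
  exact Matrix.l2_opNorm_conjTranspose_mul_self A

lemma norm_le_one_of_orthonormal (U : Matrix m n ℝ) (h : Uᵀ * U = 1) : ‖U‖ ≤ 1 := by
  have h1 : ‖U‖ * ‖U‖ ≤ 1 := by rw [← norm_sq, h]; exact norm_one_le
  nlinarith [norm_nonneg U]

lemma one_by_one_norm (M : Matrix (Fin 1) (Fin 1) ℝ) : ‖M‖ = |M 0 0| := by
  have hM : M = M 0 0 • 1 := by
    ext i j
    fin_cases i; fin_cases j
    simp
  rw [hM, norm_smul, norm_one_eq]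
  simp


lemma quad_abs_le (H : Matrix m m ℝ) (X : Matrix m (Fin 1) ℝ) :
    |(Xᵀ * (H * X)) 0 0| ≤ ‖H‖ * (‖X‖ * ‖X‖) := by
  rw [← one_by_one_norm]
  calc ‖Xᵀ * (H * X)‖ ≤ ‖Xᵀ‖ * ‖H * X‖ := Matrix.l2_opNorm_mul _ _
    _ ≤ ‖Xᵀ‖ * (‖H‖ * ‖X‖) := by
        have := Matrix.l2_opNorm_mul H X
        have h0 : (0:ℝ) ≤ ‖Xᵀ‖ := norm_nonneg _
        nlinarith
    _ = ‖H‖ * (‖X‖ * ‖X‖) := by rw [norm_transpose]; ring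


lemma mu_bound {p r : ℕ} (hr : 1 ≤ r) (hrp : r < p)
    (G H : Matrix (Fin p) (Fin p) ℝ)
    (U₀ : Matrix (Fin p) (Fin r) ℝ)
    (lam : Fin r → ℝ) (hlam_pos : ∀ i, 0 < lam i)
    (hG : G = U₀ * Matrix.diagonal lam * U₀ᵀ)
    (Uhat₁ : Matrix (Fin p) (Fin (p - r)) ℝ) (hUhat₁ : Uhat₁ᵀ * Uhat₁ = 1)
    (μ : Fin (p - r) → ℝ) (hμ : (G + H) * Uhat₁ = Uhat₁ * Matrix.diagonal μ)
    (Uhat₀ : Matrix (Fin p) (Fin r) ℝ) (hUhat₀ : Uhat₀ᵀ * Uhat₀ = 1)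
    (hperp : Uhat₀ᵀ * Uhat₁ = 0)
    (ν : Fin r → ℝ) (hν : (G + H) * Uhat₀ = Uhat₀ * Matrix.diagonal ν)
    (hsmall : ∀ i j, μ j ≤ ν i) (j : Fin (p - r)) : |μ j| ≤ ‖H‖ := by
  have hpr : 0 < p - r := by omega
  -- the selected column of Uhat₁
  set C : Matrix (Fin (p - r)) (Fin 1) ℝ := Matrix.of fun k _ => if k = j then (1:ℝ) else 0 with hC
  set u : Matrix (Fin p) (Fin 1) ℝ := Uhat₁ * C with hu
  have hCC : Cᵀ * C = 1 := by
    ext i l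
    fin_cases i; fin_cases l
    simp [Matrix.mul_apply, hC, Matrix.one_apply, ite_and]
  have huu : uᵀ * u = 1 := by
    rw [hu, Matrix.transpose_mul, Matrix.mul_assoc, ← Matrix.mul_assoc Uhat₁ᵀ, hUhat₁, Matrix.one_mul, hCC]
  have hnormu : ‖u‖ * ‖u‖ = 1 := by rw [← norm_sq, huu, norm_one_eq]
  -- eigen equation for u
  have hdC : Matrix.diagonal μ * C = μ j • C := by
    ext k l
    by_cases hk : k = j <;> simp [Matrix.diagonal_mul, hC, hk]
  have heig : (G + H) * u = μ j • u := by
    rw [hu, ← Matrix.mul_assoc, hμ, Matrix.mul_assoc, hdC, Matrix.mul_smul]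
  -- quadratic forms
  have hqsum : (uᵀ * ((G + H) * u)) 0 0 = μ j := by
    rw [heig, Matrix.mul_smul, huu]
    simp
  have hsplit : uᵀ * ((G + H) * u) = uᵀ * (G * u) + uᵀ * (H * u) := by
    rw [Matrix.add_mul, Matrix.mul_add]
  have hqG : 0 ≤ (uᵀ * (G * u)) 0 0 := by
    have hv : uᵀ * (G * u) = (U₀ᵀ * u)ᵀ * (Matrix.diagonal lam * (U₀ᵀ * u)) := by
      rw [hG]
      simp only [Matrix.transpose_mul, Matrix.transpose_transpose, Matrix.mul_assoc]
    rw [hv]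
    rw [Matrix.mul_apply]
    apply Finset.sum_nonneg
    intro i _
    rw [Matrix.diagonal_mul]
    have := (hlam_pos i).le
    simp only [Matrix.transpose_apply]
    nlinarith [sq_nonneg ((U₀ᵀ * u) i 0)]
  have hqH : |(uᵀ * (H * u)) 0 0| ≤ ‖H‖ := by
    have := quad_abs_le H u
    rwa [hnormu, mul_one] at this
  have hlow : -‖H‖ ≤ μ j := by
    have h1 : μ j = (uᵀ * (G * u)) 0 0 + (uᵀ * (H * u)) 0 0 := by
      rw [← hqsum, hsplit]; simp [Matrix.add_apply]
    have := abs_le.mp hqH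
    linarith [this.1]
  -- upper bound via dimension argument
  set W : Matrix (Fin p) (Fin r ⊕ Fin 1) ℝ := Matrix.fromCols Uhat₀ u with hW
  have hperpu : Uhat₀ᵀ * u = 0 := by rw [hu, ← Matrix.mul_assoc, hperp, Matrix.zero_mul]
  have hperpu' : uᵀ * Uhat₀ = 0 := by
    have := congrArg Matrix.transpose hperpu
    rwa [Matrix.transpose_mul, Matrix.transpose_transpose, Matrix.transpose_zero] at this
  have hWW : Wᵀ * W = 1 := by
    rw [hW, Matrix.transpose_fromCols, Matrix.fromRows_mul_fromCols, hUhat₀, huu,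
      hperpu, hperpu', Matrix.fromBlocks_one]
  have hGW : (G + H) * W = W * Matrix.fromBlocks (Matrix.diagonal ν) 0 0
      (Matrix.diagonal (fun _ : Fin 1 => μ j)) := by
    rw [hW, Matrix.mul_fromCols, Matrix.fromCols_mul_fromBlocks, hν, heig,
      Matrix.mul_zero, Matrix.mul_zero, add_zero, zero_add]
    have h2 : μ j • u = u * Matrix.diagonal (fun _ : Fin 1 => μ j) := by
      ext i l
      rw [Matrix.mul_diagonal]
      simp [mul_comm]
    rw [h2]
  -- kernel vector
  have hnotinj : ¬ Function.Injective (U₀ᵀ * W).mulVecLin := by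
    intro hinj
    have hc := LinearMap.finrank_le_finrank_of_injective hinj
    simp only [Module.finrank_pi, Fintype.card_sum, Fintype.card_fin] at hc
    omega
  rw [Function.not_injective_iff] at hnotinj
  obtain ⟨a, b, hab, hne⟩ := hnotinj
  set c : (Fin r ⊕ Fin 1) → ℝ := a - b with hc
  have hc0 : c ≠ 0 := sub_ne_zero.mpr hne
  have hBc : (U₀ᵀ * W) *ᵥ c = 0 := by
    have h2 : (U₀ᵀ * W).mulVecLin (a - b) = 0 := by rw [map_sub, hab, sub_self]
    rw [Matrix.mulVecLin_apply] at h2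
    rw [hc]
    exact h2
  set Cc : Matrix (Fin r ⊕ Fin 1) (Fin 1) ℝ := Matrix.of fun k _ => c k with hCc
  have hmulCc : ∀ {q : ℕ} (B : Matrix (Fin q) (Fin r ⊕ Fin 1) ℝ),
      B * Cc = Matrix.of fun i _ => (B *ᵥ c) i := by
    intro q B
    ext i l
    simp [Matrix.mul_apply, Matrix.mulVec, dotProduct, hCc]
  set X : Matrix (Fin p) (Fin 1) ℝ := W * Cc with hX
  have hU₀X : U₀ᵀ * X = 0 := by
    rw [hX, ← Matrix.mul_assoc, hmulCc, hBc]
    ext i l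
    simp
  have hGX : G * X = 0 := by
    have h2 : G * X = (U₀ * Matrix.diagonal lam) * (U₀ᵀ * X) := by
      rw [hG, Matrix.mul_assoc]
    rw [h2, hU₀X, Matrix.mul_zero]
  set s : ℝ := ∑ k, (c k)^2 with hs
  have hspos : 0 < s := by
    rw [hs]
    have ⟨k, hk⟩ := Function.ne_iff.mp hc0
    refine Finset.sum_pos' (fun k _ => sq_nonneg _) ⟨k, Finset.mem_univ k, ?_⟩
    have h2 : c k ^ 2 ≠ 0 := pow_ne_zero 2 hk
    exact lt_of_le_of_ne (sq_nonneg _) (Ne.symm h2)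
  have hXX : Xᵀ * X = Ccᵀ * Cc := by
    rw [hX, Matrix.transpose_mul, Matrix.mul_assoc, ← Matrix.mul_assoc Wᵀ, hWW, Matrix.one_mul]
  have hCcCc : (Ccᵀ * Cc) 0 0 = s := by
    simp [Matrix.mul_apply, hCc, hs, sq]
  have hnormX : ‖X‖ * ‖X‖ = s := by
    rw [← norm_sq, hXX, one_by_one_norm, hCcCc, abs_of_pos hspos]
  -- quadratic form of Ghat
  set d : (Fin r ⊕ Fin 1) → ℝ := Sum.elim ν (fun _ => μ j) with hd
  have hdlb : ∀ k, μ j ≤ d k := by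
    rintro (i | l)
    · exact hsmall i j
    · exact le_refl _
  have hblock : Matrix.fromBlocks (Matrix.diagonal ν) 0 0
      (Matrix.diagonal (fun _ : Fin 1 => μ j)) = Matrix.diagonal d := by
    rw [hd, Matrix.fromBlocks_diagonal]
  have hquadG : (Xᵀ * ((G + H) * X)) 0 0 = (Ccᵀ * (Matrix.diagonal d * Cc)) 0 0 := by
    rw [hX, ← Matrix.mul_assoc (G + H), hGW, hblock, Matrix.transpose_mul]
    have h3 : Wᵀ * (W * Matrix.diagonal d * Cc) = Matrix.diagonal d * Cc := by
      rw [Matrix.mul_assoc W, ← Matrix.mul_assoc Wᵀ, hWW, Matrix.one_mul]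
    rw [Matrix.mul_assoc Ccᵀ, h3]
  have hentry : (Ccᵀ * (Matrix.diagonal d * Cc)) 0 0 = ∑ k, d k * (c k)^2 := by
    rw [Matrix.mul_apply]
    congr 1
    ext k
    rw [Matrix.diagonal_mul]
    simp [hCc, sq]
    ring
  have hlowerquad : μ j * s ≤ (Xᵀ * ((G + H) * X)) 0 0 := by
    rw [hquadG, hentry, hs, Finset.mul_sum]
    apply Finset.sum_le_sum
    intro k _
    exact mul_le_mul_of_nonneg_right (hdlb k) (sq_nonneg _)
  have hsplitX : Xᵀ * ((G + H) * X) = Xᵀ * (H * X) := by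
    rw [Matrix.add_mul, hGX, zero_add]
  have hup : μ j ≤ ‖H‖ := by
    have hq := quad_abs_le H X
    rw [hnormX] at hq
    have h1 : μ j * s ≤ ‖H‖ * s := by
      rw [hsplitX] at hlowerquad
      have := (abs_le.mp hq).2
      linarith
    exact le_of_mul_le_mul_right h1 hspos
  exact abs_le.mpr ⟨by linarith, hup⟩


end DKaux

set_option maxHeartbeats 1000000 in
/-- **Davis–Kahan sin θ theorem.** Let `G` be a real symmetric positive semidefinite
`p×p` matrix of rank `r` (`1 ≤ r < p`) with spectral decomposition `G = U₀ Λ₀ U₀ᵀ`, where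
`U₀ ∈ ℝ^{p×r}` has orthonormal columns and `Λ₀ = diag(lam)` with `lam 0 ≥ ⋯ ≥ lam (r-1) > 0`.
Let `H` be real symmetric, set `Ghat = G + H`, and let `Uhat₁ ∈ ℝ^{p×(p−r)}` have orthonormal columns
that are eigenvectors of `Ghat` associated with its `p − r` smallest eigenvalues `μ` (so
`Ghat Uhat₁ = Uhat₁ diag(μ)`; here `Uhat₀, ν` complete the spectral decomposition of `Ghat`, with every `μ j`
at most every `ν i`).  If `‖H‖₂ < lam (r-1) = λ_r`, then
`‖Uhat₁ᵀ U₀‖₂ ≤ ‖H‖₂ / (λ_r − ‖H‖₂)`. -/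
theorem davis_kahan_sin_theta
    {p r : ℕ} (hr : 1 ≤ r) (hrp : r < p)
    (G H : Matrix (Fin p) (Fin p) ℝ)
    (U₀ : Matrix (Fin p) (Fin r) ℝ) (hU₀ : U₀ᵀ * U₀ = 1)
    (lam : Fin r → ℝ) (hlam_anti : Antitone lam) (hlam_pos : ∀ i, 0 < lam i)
    (hG : G = U₀ * Matrix.diagonal lam * U₀ᵀ)
    (hH : Hᵀ = H)
    (Uhat₁ : Matrix (Fin p) (Fin (p - r)) ℝ) (hUhat₁ : Uhat₁ᵀ * Uhat₁ = 1)
    (μ : Fin (p - r) → ℝ) (hμ : (G + H) * Uhat₁ = Uhat₁ * Matrix.diagonal μ)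
    (Uhat₀ : Matrix (Fin p) (Fin r) ℝ) (hUhat₀ : Uhat₀ᵀ * Uhat₀ = 1)
    (hperp : Uhat₀ᵀ * Uhat₁ = 0)
    (ν : Fin r → ℝ) (hν : (G + H) * Uhat₀ = Uhat₀ * Matrix.diagonal ν)
    (hsmall : ∀ i j, μ j ≤ ν i)
    (hgap : ‖H‖ < lam ⟨r - 1, by omega⟩) :
    ‖Uhat₁ᵀ * U₀‖ ≤ ‖H‖ / (lam ⟨r - 1, by omega⟩ - ‖H‖) := by
  set lr : ℝ := lam ⟨r - 1, by omega⟩ with hlrdef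
  have hH0 : (0:ℝ) ≤ ‖H‖ := norm_nonneg H
  have hlr : 0 < lr := hlam_pos _
  set A : Matrix (Fin (p - r)) (Fin r) ℝ := Uhat₁ᵀ * U₀ with hA
  -- symmetry
  have hGsym : Gᵀ = G := by
    rw [hG]
    simp [Matrix.transpose_mul, Matrix.transpose_transpose, Matrix.diagonal_transpose,
      Matrix.mul_assoc]
  have hGhatsym : (G + H)ᵀ = G + H := by rw [Matrix.transpose_add, hGsym, hH]
  have hrow : Uhat₁ᵀ * (G + H) = Matrix.diagonal μ * Uhat₁ᵀ := by
    have h2 := congrArg Matrix.transpose hμ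
    rwa [Matrix.transpose_mul, hGhatsym, Matrix.transpose_mul, Matrix.diagonal_transpose] at h2
  have hGU₀ : G * U₀ = U₀ * Matrix.diagonal lam := by
    rw [hG, Matrix.mul_assoc, hU₀, Matrix.mul_one]
  -- Sylvester equation
  have e1 : A * Matrix.diagonal lam = Uhat₁ᵀ * G * U₀ := by
    calc A * Matrix.diagonal lam = Uhat₁ᵀ * (U₀ * Matrix.diagonal lam) := by
          rw [hA, Matrix.mul_assoc]
      _ = Uhat₁ᵀ * (G * U₀) := by rw [hGU₀]
      _ = Uhat₁ᵀ * G * U₀ := by rw [Matrix.mul_assoc]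
  have e2 : Uhat₁ᵀ * G = Matrix.diagonal μ * Uhat₁ᵀ - Uhat₁ᵀ * H := by
    have h2 : Uhat₁ᵀ * G + Uhat₁ᵀ * H = Matrix.diagonal μ * Uhat₁ᵀ := by
      rw [← Matrix.mul_add, hrow]
    exact eq_sub_of_add_eq h2
  have hsyl : A * Matrix.diagonal lam = Matrix.diagonal μ * A - Uhat₁ᵀ * H * U₀ := by
    rw [e1, e2, Matrix.sub_mul, hA, Matrix.mul_assoc]
  -- norm bounds
  have hU₁n : ‖Uhat₁ᵀ‖ ≤ 1 := by
    rw [DKaux.norm_transpose]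
    exact DKaux.norm_le_one_of_orthonormal Uhat₁ hUhat₁
  have hU₀n : ‖U₀‖ ≤ 1 := DKaux.norm_le_one_of_orthonormal U₀ hU₀
  have hdiagμ : ‖Matrix.diagonal μ‖ ≤ ‖H‖ :=
    DKaux.opNorm_diagonal_le μ ‖H‖ hH0
      (DKaux.mu_bound hr hrp G H U₀ lam hlam_pos hG Uhat₁ hUhat₁ μ hμ Uhat₀ hUhat₀ hperp ν hν
        hsmall)
  have hAdl_le : ‖A * Matrix.diagonal lam‖ ≤ ‖H‖ * ‖A‖ + ‖H‖ := by
    rw [hsyl]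
    have b1 : ‖Matrix.diagonal μ * A‖ ≤ ‖H‖ * ‖A‖ :=
      le_trans (Matrix.l2_opNorm_mul _ _) (mul_le_mul_of_nonneg_right hdiagμ (norm_nonneg A))
    have b2 : ‖Uhat₁ᵀ * H * U₀‖ ≤ ‖H‖ := by
      have c1 := Matrix.l2_opNorm_mul (Uhat₁ᵀ * H) U₀
      have c2 := Matrix.l2_opNorm_mul Uhat₁ᵀ H
      nlinarith [norm_nonneg (Uhat₁ᵀ * H), norm_nonneg U₀, norm_nonneg Uhat₁ᵀ, norm_nonneg H]
    calc ‖Matrix.diagonal μ * A - Uhat₁ᵀ * H * U₀‖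
        ≤ ‖Matrix.diagonal μ * A‖ + ‖Uhat₁ᵀ * H * U₀‖ := norm_sub_le _ _
      _ ≤ ‖H‖ * ‖A‖ + ‖H‖ := by linarith
  have hinv : A = A * Matrix.diagonal lam * Matrix.diagonal (fun i => (lam i)⁻¹) := by
    rw [Matrix.mul_assoc, Matrix.diagonal_mul_diagonal]
    have h2 : (fun i => lam i * (lam i)⁻¹) = fun _ => (1:ℝ) :=
      funext fun i => mul_inv_cancel₀ (hlam_pos i).ne'
    rw [h2, Matrix.diagonal_one, Matrix.mul_one]
  have hinvnorm : ‖Matrix.diagonal (fun i => (lam i)⁻¹)‖ ≤ lr⁻¹ := by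
    apply DKaux.opNorm_diagonal_le _ _ (by positivity)
    intro i
    rw [abs_of_pos (inv_pos.mpr (hlam_pos i))]
    have hle : i ≤ (⟨r - 1, by omega⟩ : Fin r) := by
      rw [Fin.le_def]
      simp only []
      omega
    have h3 : lr ≤ lam i := hlam_anti hle
    gcongr
  have hAle : ‖A‖ ≤ (‖H‖ * ‖A‖ + ‖H‖) * lr⁻¹ := by
    calc ‖A‖ = ‖A * Matrix.diagonal lam * Matrix.diagonal (fun i => (lam i)⁻¹)‖ := by
          rw [← hinv]
      _ ≤ ‖A * Matrix.diagonal lam‖ * ‖Matrix.diagonal (fun i => (lam i)⁻¹)‖ :=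
          Matrix.l2_opNorm_mul _ _
      _ ≤ (‖H‖ * ‖A‖ + ‖H‖) * lr⁻¹ := by
          apply mul_le_mul hAdl_le hinvnorm (norm_nonneg _) (by positivity)
  have h5 : ‖A‖ * lr ≤ ‖H‖ * ‖A‖ + ‖H‖ := by
    have h6 := mul_le_mul_of_nonneg_right hAle hlr.le
    rwa [mul_assoc, inv_mul_cancel₀ hlr.ne', mul_one] at h6
  rw [le_div_iff₀ (by linarith)]
  nlinarith
end

section
/- Let u ∈ ℝ^p be a unit vector, λ > 0, and set G = λ u uᵀ. Let H be a real symmetric p×p matrix with ‖H‖₂ < λ, set Ĝ = G + H, and let û be a unit eigenvector of Ĝ corresponding to its largest eigenvalue. Then ‖û ûᵀ − u uᵀ‖₂ ≤ ‖H‖₂ / (λ − ‖H‖₂). -/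
open scoped Matrix.Norms.L2Operator
open Matrix

section helpers
variable {p : ℕ}

lemma myInner_eq (x y : EuclideanSpace ℝ (Fin p)) : (inner ℝ x y : ℝ) = ∑ i, x i * y i := by
  simp [PiLp.inner_apply, RCLike.inner_apply, mul_comm]

lemma myNorm_eq (x : EuclideanSpace ℝ (Fin p)) : ‖x‖ = Real.sqrt (∑ i, x i ^ 2) := by
  rw [EuclideanSpace.norm_eq]
  simp_rw [Real.norm_eq_abs, sq_abs]

lemma myCS (x y : Fin p → ℝ) :
    ∑ i, x i * y i ≤ Real.sqrt (∑ i, x i ^ 2) * Real.sqrt (∑ i, y i ^ 2) := by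
  have h := real_inner_le_norm (WithLp.toLp 2 x) (WithLp.toLp 2 y)
  rwa [myInner_eq, myNorm_eq, myNorm_eq] at h

lemma myHmul (H : Matrix (Fin p) (Fin p) ℝ) (x : Fin p → ℝ) :
    Real.sqrt (∑ i, (H *ᵥ x) i ^ 2) ≤ ‖H‖ * Real.sqrt (∑ i, x i ^ 2) := by
  have h := Matrix.l2_opNorm_mulVec H (WithLp.toLp 2 x)
  rwa [myNorm_eq, myNorm_eq] at h

end helpers

lemma rayleigh_le_max {p : ℕ} (A : Matrix (Fin p) (Fin p) ℝ) (hA : A.IsHermitian) (μ : ℝ)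
    (hmax : ∀ (ν : ℝ) (w : Fin p → ℝ), w ≠ 0 → A *ᵥ w = ν • w → ν ≤ μ)
    (x : Fin p → ℝ) (hx : ∑ i, x i ^ 2 = 1) :
    ∑ i, x i * (A *ᵥ x) i ≤ μ := by
  classical
  have hAT : Aᵀ = A := (Matrix.conjTranspose_eq_transpose_of_trivial A).symm.trans hA
  set b := hA.eigenvectorBasis with hb
  have hev : ∀ i, hA.eigenvalues i ≤ μ := by
    intro i
    refine hmax _ (b i) ?_ (hA.mulVec_eigenvectorBasis i)
    intro h0
    have h1 : ‖b i‖ = 1 := b.orthonormal.1 i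
    rw [show (b i : EuclideanSpace ℝ (Fin p)) = 0 from by ext j; exact congrFun h0 j] at h1
    simp at h1
  have hx' : (inner ℝ (WithLp.toLp 2 x)
      (WithLp.toLp 2 x) : ℝ) = 1 := by
    rw [myInner_eq]
    simpa [sq] using hx
  have hP1 := b.sum_inner_mul_inner (WithLp.toLp 2 x)
    (WithLp.toLp 2 x)
  have hP2 := b.sum_inner_mul_inner (WithLp.toLp 2 x)
    (WithLp.toLp 2 (A *ᵥ x))
  have hbi : ∀ i, (inner ℝ (b i) (WithLp.toLp 2 (A *ᵥ x)) : ℝ)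
      = hA.eigenvalues i * inner ℝ (b i) (WithLp.toLp 2 x) := by
    intro i
    rw [myInner_eq, myInner_eq]
    simp only [WithLp.ofLp_toLp]
    have h1 : ∑ k, b i k * (A *ᵥ x) k = ∑ k, (A *ᵥ b i) k * x k := by
      have h2 := Matrix.dotProduct_mulVec (b i).ofLp A x
      rw [← Matrix.mulVec_transpose, hAT] at h2
      exact h2
    have hme : A *ᵥ (b i) = hA.eigenvalues i • (b i) := hA.mulVec_eigenvectorBasis i
    rw [h1, hme, Finset.mul_sum]
    exact Finset.sum_congr rfl fun k _ => by simp [Pi.smul_apply, smul_eq_mul]; ring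
  have hsumsq : ∑ i, (inner ℝ (WithLp.toLp 2 x) (b i) : ℝ) ^ 2 = 1 := by
    rw [← hx', ← hP1]
    exact Finset.sum_congr rfl fun i _ => by rw [real_inner_comm (b i)]; ring
  calc ∑ i, x i * (A *ᵥ x) i
      = (inner ℝ (WithLp.toLp 2 x)
          (WithLp.toLp 2 (A *ᵥ x)) : ℝ) := (myInner_eq (WithLp.toLp 2 x) (WithLp.toLp 2 (A *ᵥ x))).symm
    _ = ∑ i, (inner ℝ (WithLp.toLp 2 x) (b i) : ℝ)
          * inner ℝ (b i) (WithLp.toLp 2 (A *ᵥ x)) := hP2.symm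
    _ = ∑ i, hA.eigenvalues i
          * (inner ℝ (WithLp.toLp 2 x) (b i) : ℝ) ^ 2 := by
        refine Finset.sum_congr rfl fun i _ => ?_
        rw [hbi i, real_inner_comm (b i)]; ring
    _ ≤ ∑ i, μ * (inner ℝ (WithLp.toLp 2 x) (b i) : ℝ) ^ 2 :=
        Finset.sum_le_sum fun i _ => mul_le_mul_of_nonneg_right (hev i) (sq_nonneg _)
    _ = μ := by rw [← Finset.mul_sum, hsumsq, mul_one]


set_option maxHeartbeats 1000000 in
/-- Let `u ∈ ℝ^p` be a unit vector, `lam > 0`, and set `G = lam • u uᵀ`.  Let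
`H` be a real symmetric `p×p` matrix with `‖H‖₂ < lam`, set `Ĝ = G + H`, and let `uhat` be a unit
eigenvector of `Ĝ` corresponding to its largest eigenvalue `μ`.  Then
`‖uhat uhatᵀ − u uᵀ‖₂ ≤ ‖H‖₂ / (lam − ‖H‖₂)`. -/
theorem rank_one_eigenvector_perturbation
    {p : ℕ} (u : Fin p → ℝ) (hu : ∑ i, u i ^ 2 = 1)
    (lam : ℝ) (hlam : 0 < lam)
    (H : Matrix (Fin p) (Fin p) ℝ) (hH : Hᵀ = H)
    (hHlam : ‖H‖ < lam)
    (uhat : Fin p → ℝ) (huhat : ∑ i, uhat i ^ 2 = 1) (μ : ℝ)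
    (heig : (lam • vecMulVec u u + H) *ᵥ uhat = μ • uhat)
    (hmax : ∀ (ν : ℝ) (w : Fin p → ℝ), w ≠ 0 →
      (lam • vecMulVec u u + H) *ᵥ w = ν • w → ν ≤ μ) :
    ‖vecMulVec uhat uhat - vecMulVec u u‖ ≤ ‖H‖ / (lam - ‖H‖) := by
  classical
  have hHn : (0:ℝ) ≤ ‖H‖ := norm_nonneg H
  have hs : 0 < lam - ‖H‖ := by linarith
  have hS1 : ∑ j, u j * u j = 1 := by
    rw [Finset.sum_congr rfl fun j _ => (pow_two (u j)).symm]; exact hu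
  set A := lam • vecMulVec u u + H with hAdef
  have hAT : Aᵀ = A := by
    have huuT : (vecMulVec u u)ᵀ = vecMulVec u u := by
      ext i j; simp [vecMulVec_apply, mul_comm]
    rw [hAdef, Matrix.transpose_add, Matrix.transpose_smul, huuT, hH]
  have hAherm : A.IsHermitian := (Matrix.conjTranspose_eq_transpose_of_trivial A).trans hAT
  have hmv : ∀ (x : Fin p → ℝ) (i : Fin p),
      (A *ᵥ x) i = lam * u i * (∑ j, u j * x j) + (H *ᵥ x) i := by
    intro x i
    have h1 : ∀ j, ((lam • vecMulVec u u + H) i j) * x j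
        = lam * u i * (u j * x j) + H i j * x j := by
      intro j
      simp only [Matrix.add_apply, Matrix.smul_apply, vecMulVec_apply, smul_eq_mul]
      ring
    show ∑ j, A i j * x j = _
    rw [hAdef]
    rw [Finset.sum_congr rfl fun j _ => h1 j, Finset.sum_add_distrib, ← Finset.mul_sum]
    rfl
  -- Step A : lam - ‖H‖ ≤ μ
  have hmu : lam - ‖H‖ ≤ μ := by
    have hR := rayleigh_le_max A hAherm μ hmax u hu
    have h1 : ∑ i, u i * (A *ᵥ u) i = lam + ∑ i, u i * (H *ᵥ u) i := by
      have h2 : ∀ i, u i * (A *ᵥ u) i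
          = (lam * ∑ j, u j * u j) * (u i * u i) + u i * (H *ᵥ u) i := by
        intro i; rw [hmv u i]; ring
      rw [Finset.sum_congr rfl fun i _ => h2 i, Finset.sum_add_distrib, ← Finset.mul_sum,
        hS1]
      ring
    have h4 : -‖H‖ ≤ ∑ i, u i * (H *ᵥ u) i := by
      have h5 := myCS u (fun i => -(H *ᵥ u) i)
      have h6 : ∑ i, (-(H *ᵥ u) i) ^ 2 = ∑ i, (H *ᵥ u) i ^ 2 :=
        Finset.sum_congr rfl fun i _ => by ring
      rw [h6, hu, Real.sqrt_one, one_mul] at h5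
      have h7 := myHmul H u
      rw [hu, Real.sqrt_one, mul_one] at h7
      have h8 : ∑ i, u i * (-(H *ᵥ u) i) = -∑ i, u i * (H *ᵥ u) i := by
        rw [← Finset.sum_neg_distrib]
        exact Finset.sum_congr rfl fun i _ => by ring
      rw [h8] at h5
      have h9 : (0:ℝ) ≤ Real.sqrt (∑ i, (H *ᵥ u) i ^ 2) := Real.sqrt_nonneg _
      linarith
    rw [h1] at hR
    linarith
  -- Step B
  set c : ℝ := ∑ i, u i * uhat i with hc
  have hc2 : c ^ 2 ≤ 1 := by
    have h5 := myCS u uhat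
    have h5' := myCS (fun i => -u i) uhat
    have h6 : ∑ i, (-u i) ^ 2 = ∑ i, u i ^ 2 := Finset.sum_congr rfl fun i _ => by ring
    rw [hu, huhat, Real.sqrt_one, one_mul] at h5
    rw [h6, hu, huhat, Real.sqrt_one, one_mul] at h5'
    have h7 : ∑ i, (-u i) * uhat i = -c := by
      rw [hc, ← Finset.sum_neg_distrib]
      exact Finset.sum_congr rfl fun i _ => by ring
    rw [h7] at h5'
    nlinarith
  have hc2' : (0:ℝ) ≤ 1 - c ^ 2 := by linarith
  have heig' : ∀ i, lam * u i * c + (H *ᵥ uhat) i = μ * uhat i := by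
    intro i
    have h1 := congrFun heig i
    rw [show (lam • vecMulVec u u + H) *ᵥ uhat = A *ᵥ uhat from rfl] at h1
    rw [hmv uhat i] at h1
    simp only [Pi.smul_apply, smul_eq_mul] at h1
    rw [← hc] at h1
    exact h1
  have hT : ∑ i, (uhat i - c * u i) * (H *ᵥ uhat) i = μ * (1 - c ^ 2) := by
    have h1 : ∀ i, (uhat i - c * u i) * (H *ᵥ uhat) i
        = μ * uhat i ^ 2 - ((lam + μ) * c) * (u i * uhat i)
          + (lam * c ^ 2) * (u i * u i) := by
      intro i
      have h0 : (H *ᵥ uhat) i = μ * uhat i - lam * u i * c := by linarith [heig' i]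
      rw [h0]; ring
    rw [Finset.sum_congr rfl fun i _ => h1 i]
    simp only [Finset.sum_add_distrib, Finset.sum_sub_distrib, ← Finset.mul_sum]
    rw [huhat, hS1, ← hc]
    ring
  have hw2 : ∑ i, (uhat i - c * u i) ^ 2 = 1 - c ^ 2 := by
    have h1 : ∀ i, (uhat i - c * u i) ^ 2
        = uhat i ^ 2 - (2 * c) * (u i * uhat i) + c ^ 2 * (u i * u i) := by
      intro i; ring
    rw [Finset.sum_congr rfl fun i _ => h1 i]
    simp only [Finset.sum_add_distrib, Finset.sum_sub_distrib, ← Finset.mul_sum]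
    rw [huhat, hS1, ← hc]
    ring
  have hKey : μ * (1 - c ^ 2) ≤ Real.sqrt (1 - c ^ 2) * ‖H‖ := by
    rw [← hT]
    have h1 := myCS (fun i => uhat i - c * u i) (fun i => (H *ᵥ uhat) i)
    rw [hw2] at h1
    have h2 := myHmul H uhat
    rw [huhat, Real.sqrt_one, mul_one] at h2
    have h3 : (0:ℝ) ≤ Real.sqrt (1 - c ^ 2) := Real.sqrt_nonneg _
    calc ∑ i, (uhat i - c * u i) * (H *ᵥ uhat) i
        ≤ Real.sqrt (1 - c ^ 2) * Real.sqrt (∑ i, (H *ᵥ uhat) i ^ 2) := h1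
      _ ≤ Real.sqrt (1 - c ^ 2) * ‖H‖ := mul_le_mul_of_nonneg_left h2 h3
  by_cases hczero : 1 - c ^ 2 = 0
  · -- uhat = ± u, the projector difference vanishes
    have hw0 : ∀ i, uhat i - c * u i = 0 := by
      have h1 : ∑ i, (uhat i - c * u i) ^ 2 = 0 := by rw [hw2, hczero]
      intro i
      have h2 := (Finset.sum_eq_zero_iff_of_nonneg
        (fun j _ => sq_nonneg (uhat j - c * u j))).1 h1 i (Finset.mem_univ i)
      exact pow_eq_zero_iff (n := 2) (by norm_num) |>.1 h2
    have hMM : vecMulVec uhat uhat = vecMulVec u u := by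
      ext i j
      simp only [vecMulVec_apply]
      have hi : uhat i = c * u i := by linarith [hw0 i]
      have hj : uhat j = c * u j := by linarith [hw0 j]
      have hcc : c ^ 2 = 1 := by linarith
      rw [hi, hj]
      linear_combination u i * u j * hcc
    rw [hMM, sub_self]
    rw [show ‖(0 : Matrix (Fin p) (Fin p) ℝ)‖ = 0 from norm_zero]
    positivity
  · have hctpos : 0 < 1 - c ^ 2 := lt_of_le_of_ne hc2' (Ne.symm hczero)
    set t := Real.sqrt (1 - c ^ 2) with htdef
    have ht0 : 0 ≤ t := Real.sqrt_nonneg _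
    have ht2 : t ^ 2 = 1 - c ^ 2 := Real.sq_sqrt hc2'
    have htpos : 0 < t := Real.sqrt_pos.2 hctpos
    have htle : t ≤ ‖H‖ / (lam - ‖H‖) := by
      rw [le_div_iff₀ hs]
      nlinarith [hKey, hmu, ht2, htpos]
    have hMle : ‖vecMulVec uhat uhat - vecMulVec u u‖ ≤ t := by
      rw [Matrix.l2_opNorm_def]
      refine ContinuousLinearMap.opNorm_le_bound _ ht0 ?_
      intro x
      have hfx : ((Matrix.toEuclideanLin.trans LinearMap.toContinuousLinearMap)
            (vecMulVec uhat uhat - vecMulVec u u)) x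
          = (WithLp.toLp 2
              ((vecMulVec uhat uhat - vecMulVec u u) *ᵥ (WithLp.ofLp x))) := rfl
      rw [hfx, myNorm_eq, myNorm_eq]
      simp only [WithLp.ofLp_toLp]
      set a : ℝ := ∑ i, u i * x i with ha
      set bb : ℝ := ∑ i, uhat i * x i with hbb
      set X : ℝ := ∑ i, x i ^ 2 with hX
      have hX0 : (0:ℝ) ≤ X := Finset.sum_nonneg fun i _ => sq_nonneg _
      have hMx : ∀ i, ((vecMulVec uhat uhat - vecMulVec u u) *ᵥ x) i
          = bb * uhat i - a * u i := by
        intro i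
        show ∑ j, (vecMulVec uhat uhat - vecMulVec u u) i j * x j = _
        have h1 : ∀ j, (vecMulVec uhat uhat - vecMulVec u u) i j * x j
            = uhat i * (uhat j * x j) - u i * (u j * x j) := by
          intro j
          simp only [Matrix.sub_apply, vecMulVec_apply]
          ring
        rw [Finset.sum_congr rfl fun j _ => h1 j, Finset.sum_sub_distrib,
          ← Finset.mul_sum, ← Finset.mul_sum, ← ha, ← hbb]
        ring
      have hQsum : ∑ i, ((vecMulVec uhat uhat - vecMulVec u u) *ᵥ x) i ^ 2
          = bb ^ 2 + a ^ 2 - 2 * (a * bb) * c := by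
        have h1 : ∀ i, ((vecMulVec uhat uhat - vecMulVec u u) *ᵥ x) i ^ 2
            = bb ^ 2 * uhat i ^ 2 - (2 * (a * bb)) * (u i * uhat i)
              + a ^ 2 * (u i * u i) := by
          intro i; rw [hMx i]; ring
        rw [Finset.sum_congr rfl fun i _ => h1 i]
        simp only [Finset.sum_add_distrib, Finset.sum_sub_distrib, ← Finset.mul_sum]
        rw [huhat, hS1, ← hc]
        ring
      have hpos : (0:ℝ) ≤ ∑ i, ((1 - c ^ 2) * x i - (a - bb * c) * u i
          - (bb - a * c) * uhat i) ^ 2 := Finset.sum_nonneg fun i _ => sq_nonneg _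
      have hid : ∑ i, ((1 - c ^ 2) * x i - (a - bb * c) * u i
            - (bb - a * c) * uhat i) ^ 2
          = (1 - c ^ 2) * ((1 - c ^ 2) * X - (bb ^ 2 + a ^ 2 - 2 * (a * bb) * c)) := by
        have h1 : ∀ i, ((1 - c ^ 2) * x i - (a - bb * c) * u i
              - (bb - a * c) * uhat i) ^ 2
            = (1 - c ^ 2) ^ 2 * x i ^ 2 + (a - bb * c) ^ 2 * (u i * u i)
              + (bb - a * c) ^ 2 * uhat i ^ 2
              - (2 * (1 - c ^ 2) * (a - bb * c)) * (u i * x i)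
              - (2 * (1 - c ^ 2) * (bb - a * c)) * (uhat i * x i)
              + (2 * (a - bb * c) * (bb - a * c)) * (u i * uhat i) := by
          intro i; ring
        rw [Finset.sum_congr rfl fun i _ => h1 i]
        simp only [Finset.sum_add_distrib, Finset.sum_sub_distrib, ← Finset.mul_sum]
        rw [huhat, hS1, ← hc, ← ha, ← hbb, ← hX]
        ring
      rw [hid] at hpos
      have hQX : bb ^ 2 + a ^ 2 - 2 * (a * bb) * c ≤ (1 - c ^ 2) * X := by
        nlinarith [hpos, hctpos]
      rw [hQsum]
      calc Real.sqrt (bb ^ 2 + a ^ 2 - 2 * (a * bb) * c)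
          ≤ Real.sqrt ((1 - c ^ 2) * X) := Real.sqrt_le_sqrt hQX
        _ = t * Real.sqrt X := by rw [Real.sqrt_mul hc2']
    linarith
end
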